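/- arXiv:1806.09015 — 5 statements merged into one kernel-verified Lean document; each statement's English description precedes it below -/
import Mathlib

section
/- Let α be an ordinal, let t₀ ≤ α be a limit ordinal whose cofinality is uncountable (cf(t₀) > ω), and let x : [0,α] → ℝ be a function that is continuous at every point of countable character of [0,α], i.e. at every limit ordinal t ≤ α with cf(t) = ω. Then there exists an ordinal γ < t₀ such that x is constant on the open interval (γ, t₀). -/
/-!
If `x` oscillated by more than `ε` on every tail `(γ, t₀)`, one could pick, alternately, an
ordinal and a pair of points above it where `x` differs by more than `ε`. This yields an
increasing `ω`-sequence whose supremum is still below `t₀` (as `cf t₀ > ω`) and has cofinality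
`ω`, so `x` is continuous there, which the pairs contradict. The supremum of the tails found for
`ε = 1/(n+1)` is again below `t₀`, and `x` is constant beyond it.
-/

open Filter Topology Order Set Cardinal

namespace Ordinal

theorem iSup_nat_lt_of_aleph0_lt_cof {o : Ordinal} (ho : ℵ₀ < o.cof) {f : ℕ → Ordinal}
    (hf : ∀ n, f n < o) : ⨆ n, f n < o :=
  lift_iSup_lt_of_lt_cof (by simpa using ho) hf

theorem cof_iSup_nat {f : ℕ → Ordinal} (hf : StrictMono f) : (⨆ n, f n).cof = ℵ₀ := by
  simpa [Order.cof_eq_aleph0] using lift_cof_iSup.{_, 0} hf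

theorem isSuccLimit_iSup_nat {f : ℕ → Ordinal} (hf : StrictMono f) :
    IsSuccLimit (⨆ n, f n) :=
  one_lt_cof_iff.1 ((cof_iSup_nat hf).symm ▸ one_lt_aleph0)

end Ordinal

theorem tendsto_ciSup_of_le_of_le {α ι : Type*} [ConditionallyCompleteLinearOrder α]
    [TopologicalSpace α] [OrderTopology α] [Preorder ι] {c a : ι → α} (hc : Monotone c)
    (hbdd : BddAbove (range c)) (hca : ∀ i, c i ≤ a i) (ha : ∀ i, a i ≤ ⨆ i, c i) :
    Tendsto a atTop (𝓝 (⨆ i, c i)) :=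
  tendsto_of_tendsto_of_tendsto_of_le_of_le (tendsto_atTop_ciSup hc hbdd) tendsto_const_nhds hca ha

theorem exists_lt_forall_dist_le_of_aleph0_lt_cof {Y : Type*} [PseudoMetricSpace Y]
    {α : Ordinal} {x : Set.Iic α → Y}
    (hx : ∀ t : Set.Iic α, IsSuccLimit (t : Ordinal) →
      Ordinal.cof (t : Ordinal) = ℵ₀ → ContinuousAt x t)
    {t₀ : Ordinal} (hcof : ℵ₀ < t₀.cof) {ε : ℝ} (hε : 0 < ε) :
    ∃ γ < t₀, ∀ s s' : Set.Iic α, γ < (s : Ordinal) → (s : Ordinal) < t₀ →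
      γ < (s' : Ordinal) → (s' : Ordinal) < t₀ → dist (x s) (x s') ≤ ε := by
  by_contra! hbad
  choose! s s' hγs hst₀ hγs' hs't₀ hdist using hbad
  set g : Ordinal → Ordinal := fun γ ↦ max (s γ : Ordinal) (s' γ)
  set c : ℕ → Ordinal := fun n ↦ g^[n] 0
  have hc_succ (n : ℕ) : c (n + 1) = g (c n) := Function.iterate_succ_apply' g n 0
  have hct₀ (n : ℕ) : c n < t₀ := by
    induction n with
    | zero => exact pos_iff_ne_zero.2 fun h ↦ by simp [h] at hcof
    | succ n ih => rw [hc_succ]; exact max_lt (hst₀ _ ih) (hs't₀ _ ih)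
  have hc_mono : StrictMono c := strictMono_nat_of_lt_succ fun n ↦
    hc_succ n ▸ (hγs _ (hct₀ n)).trans_le (le_max_left _ _)
  have hbdd : BddAbove (range c) := Ordinal.bddAbove_of_small
  have htα : ⨆ n, c n ≤ α := ciSup_le fun n ↦ by
    cases n with
    | zero => exact zero_le
    | succ n => rw [hc_succ]; exact max_le (s _).2 (s' _).2
  set t : Set.Iic α := ⟨⨆ n, c n, htα⟩
  have hxt : ContinuousAt x t :=
    hx t (Ordinal.isSuccLimit_iSup_nat hc_mono) (Ordinal.cof_iSup_nat hc_mono)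
  have tendsto_t {u : Ordinal → Set.Iic α} (hγu : ∀ γ < t₀, γ < (u γ : Ordinal))
      (hug : ∀ γ, (u γ : Ordinal) ≤ g γ) : Tendsto (fun n ↦ u (c n)) atTop (𝓝 t) :=
    tendsto_subtype_rng.2 <| tendsto_ciSup_of_le_of_le hc_mono.monotone hbdd
      (fun n ↦ (hγu _ (hct₀ n)).le)
      (fun n ↦ (hug _).trans <| hc_succ n ▸ le_ciSup hbdd (n + 1))
  have hdist_zero : Tendsto (fun n ↦ dist (x (s (c n))) (x (s' (c n)))) atTop (𝓝 0) := by
    simpa using (hxt.tendsto.comp (tendsto_t hγs fun _ ↦ le_max_left _ _)).dist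
      (hxt.tendsto.comp (tendsto_t hγs' fun _ ↦ le_max_right _ _))
  obtain ⟨n, hn⟩ := (hdist_zero.eventually (gt_mem_nhds hε)).exists
  exact (hdist _ (hct₀ n)).not_gt hn

/-- Let `t₀ ≤ α` be a limit ordinal of uncountable cofinality, and let
`x : [0,α] → ℝ` be continuous at every limit ordinal `t ≤ α` of cofinality `ω`
(i.e. at every point of countable character). Then `x` is constant on some
interval `(γ, t₀)` with `γ < t₀`. -/
theorem stmt4 (α : Ordinal) (t₀ : Set.Iic α) (hlim : Order.IsSuccLimit (t₀ : Ordinal))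
    (hcof : Cardinal.aleph0 < Ordinal.cof (t₀ : Ordinal))
    (x : Set.Iic α → ℝ)
    (hx : ∀ t : Set.Iic α, Order.IsSuccLimit (t : Ordinal) →
      Ordinal.cof (t : Ordinal) = Cardinal.aleph0 → ContinuousAt x t) :
    ∃ γ : Ordinal, γ < (t₀ : Ordinal) ∧ ∃ c : ℝ, ∀ s : Set.Iic α,
      γ < (s : Ordinal) → (s : Ordinal) < (t₀ : Ordinal) → x s = c := by
  choose γ hγt₀ hγ using fun n : ℕ ↦
    exists_lt_forall_dist_le_of_aleph0_lt_cof hx hcof (Nat.one_div_pos_of_nat (n := n))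
  have hsup : ⨆ n, γ n < t₀ := Ordinal.iSup_nat_lt_of_aleph0_lt_cof hcof hγt₀
  have hγ_le (n : ℕ) : γ n ≤ ⨆ n, γ n := le_ciSup Ordinal.bddAbove_of_small n
  let p : Set.Iic α := ⟨succ (⨆ n, γ n), (hlim.succ_lt hsup).le.trans t₀.2⟩
  have hpt₀ : (p : Ordinal) < t₀ := hlim.succ_lt hsup
  refine ⟨⨆ n, γ n, hsup, x p, fun s hs hst₀ ↦ dist_le_zero.1 ?_⟩
  refine ge_of_tendsto' tendsto_one_div_add_atTop_nhds_zero_nat fun n ↦ ?_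
  exact hγ n s p ((hγ_le n).trans_lt hs) hst₀ ((hγ_le n).trans_lt (lt_succ _)) hpt₀
end

section
/- Let α be an ordinal and let x : [0,α] → ℝ be a function that is continuous at every point of countable character of [0,α], i.e. at every limit ordinal t ≤ α with cf(t) = ω. Then the set D(x) of points of [0,α] at which x is discontinuous is at most countable. -/
/-!
A discontinuity of `f` at `t` is seen from the left, as a jump of size at least `1 / (n + 1)`
for some `n`: every interval `(s, t]` contains a point where `f` is that far from `f t`.
For a fixed size there are only finitely many such jumps: a strictly increasing sequence of
them has a supremum of cofinality `ω`, where `f` is continuous, and continuity there leaves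
no room for jumps of a fixed size arbitrarily close to it from the left.
-/

open Set Topology

section WellOrder

variable {X M : Type*} [LinearOrder X] [WellFoundedLT X]

theorem Set.Infinite.exists_strictMono_mem {s : Set X} (hs : s.Infinite) :
    ∃ u : ℕ → X, StrictMono u ∧ ∀ n, u n ∈ s := by
  have := hs.to_subtype
  obtain ⟨u, hu | hu⟩ := Infinite.exists_strictMono_or_strictAnti s
  · exact ⟨fun n ↦ u n, hu, fun n ↦ (u n).2⟩
  · exact absurd hu (not_strictAnti_of_wellFoundedLT u)

variable [TopologicalSpace X] [OrderTopology X]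

theorem hasBasis_nhds_Ioc_of_wellFoundedLT {t : X} (ht : ∃ s, s < t) :
    (𝓝 t).HasBasis (· < t) (Ioc · t) :=
  letI := SuccOrder.ofLinearWellFoundedLT X
  SuccOrder.hasBasis_nhds_Ioc_of_exists_lt ht

variable [PseudoMetricSpace M] (f : X → M)

def HasLeftJump (ε : ℝ) (t : X) : Prop :=
  ∀ s < t, ∃ u ∈ Ioc s t, ε ≤ dist (f u) (f t)

theorem exists_hasLeftJump_of_not_continuousAt {t : X} (h : ¬ ContinuousAt f t) :
    ∃ n : ℕ, HasLeftJump f (1 / (n + 1)) t := by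
  by_cases ht : ∃ s, s < t
  · rw [ContinuousAt, ((hasBasis_nhds_Ioc_of_wellFoundedLT ht).tendsto_iff
      Metric.nhds_basis_ball)] at h
    push Not at h
    obtain ⟨ε, hε, hjump⟩ := h
    obtain ⟨n, hn⟩ := exists_nat_one_div_lt hε
    refine ⟨n, fun s hs ↦ ?_⟩
    obtain ⟨u, hu, hfar⟩ := hjump s hs
    exact ⟨u, hu, hn.le.trans (not_lt.1 hfar)⟩
  · push Not at ht
    exact ⟨0, fun s hs ↦ absurd hs (not_lt.2 (ht s))⟩

theorem exists_not_hasLeftJump_of_isLUB {u : ℕ → X} (hu : StrictMono u) {t : X}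
    (hlub : IsLUB (range u) t) (hcont : ContinuousAt f t) {ε : ℝ} (hε : 0 < ε) :
    ∃ k, ¬ HasLeftJump f ε (u k) := by
  have hut : ∀ k, u k < t := fun k ↦ (hu k.lt_succ_self).trans_le (hlub.1 ⟨k + 1, rfl⟩)
  obtain ⟨s, hst, hclose⟩ := ((hasBasis_nhds_Ioc_of_wellFoundedLT ⟨u 0, hut 0⟩).tendsto_iff
    Metric.nhds_basis_ball).1 hcont (ε / 2) (half_pos hε)
  obtain ⟨_, ⟨k, rfl⟩, hsk⟩ := (lt_isLUB_iff hlub).1 hst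
  refine ⟨k, fun hjump ↦ ?_⟩
  obtain ⟨v, hv, hfar⟩ := hjump s hsk
  have hv_close := hclose v ⟨hv.1, hv.2.trans (hut k).le⟩
  have hk_close := hclose (u k) ⟨hsk, (hut k).le⟩
  have := dist_triangle_right (f v) (f (u k)) (f t)
  simp only [Metric.mem_ball] at hv_close hk_close
  linarith

theorem finite_setOf_hasLeftJump
    (hf : ∀ u : ℕ → X, StrictMono u → ∃ t, IsLUB (range u) t ∧ ContinuousAt f t)
    {ε : ℝ} (hε : 0 < ε) : {t | HasLeftJump f ε t}.Finite := by
  by_contra hinf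
  obtain ⟨u, hu, hjump⟩ := Set.Infinite.exists_strictMono_mem hinf
  obtain ⟨t, hlub, hcont⟩ := hf u hu
  obtain ⟨k, hk⟩ := exists_not_hasLeftJump_of_isLUB f hu hlub hcont hε
  exact hk (hjump k)

theorem countable_setOf_not_continuousAt_of_wellFoundedLT
    (hf : ∀ u : ℕ → X, StrictMono u → ∃ t, IsLUB (range u) t ∧ ContinuousAt f t) :
    {t | ¬ ContinuousAt f t}.Countable := by
  refine ((countable_iUnion fun n : ℕ ↦
    (finite_setOf_hasLeftJump f hf (ε := 1 / (n + 1)) Nat.one_div_pos_of_nat).countable).mono ?_)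
  intro t ht
  exact mem_iUnion.2 (exists_hasLeftJump_of_not_continuousAt f ht)

end WellOrder

namespace Ordinal

universe u v

theorem cof_iSup_nat_s5 {g : ℕ → Ordinal.{u}} (hg : StrictMono g) :
    cof (⨆ n, g n) = Cardinal.aleph0 := by
  simpa using lift_cof_iSup.{u, 0} hg

theorem isLUB_range_Iic {α : Ordinal.{u}} {ι : Type v} [Small.{u} ι] (g : ι → Iic α) :
    IsLUB (range g) ⟨⨆ i, (g i : Ordinal), Ordinal.iSup_le fun i ↦ (g i).2⟩ :=
  ⟨by rintro _ ⟨i, rfl⟩; exact Ordinal.le_iSup (fun i ↦ (g i : Ordinal)) i,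
    fun _ hb ↦ Ordinal.iSup_le fun i ↦ hb ⟨i, rfl⟩⟩

end Ordinal

/-- If `x : [0,α] → ℝ` is continuous at every limit ordinal `t ≤ α` of cofinality `ω`
(i.e. at every point of countable character), then the set of points of discontinuity
of `x` is at most countable. -/
theorem stmt5 (α : Ordinal) (x : Set.Iic α → ℝ)
    (hx : ∀ t : Set.Iic α, Order.IsSuccLimit (t : Ordinal) →
      Ordinal.cof (t : Ordinal) = Cardinal.aleph0 → ContinuousAt x t) :
    {t : Set.Iic α | ¬ ContinuousAt x t}.Countable := by
  refine countable_setOf_not_continuousAt_of_wellFoundedLT x fun u hu ↦ ?_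
  have hcof := Ordinal.cof_iSup_nat_s5 (g := fun n ↦ (u n : Ordinal)) hu
  have hlim := Ordinal.one_lt_cof_iff.1 (hcof ▸ Cardinal.one_lt_aleph0)
  exact ⟨_, Ordinal.isLUB_range_Iic u, hx _ hlim hcof⟩
end

section
/- Let τ ≥ ω₁ be a regular initial ordinal and let σ ≤ τ be an initial ordinal. A function x : [0, τ·σ] → ℝ belongs to M_{τσ} if and only if for every subset S of [0, τ·σ] of cardinality strictly less than |τ| there exists a continuous function y : [0, τ·σ] → ℝ with y(t) = x(t) for all t ∈ S. (Equivalently: x ∈ M_{τσ} iff every λ-neighborhood of x in ℝ^[0,τ·σ], for every initial ordinal λ < τ, meets C_p([0, τ·σ]).) -/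
/-!
If `x` is discontinuous at some `t` with `cf t < τ`, a cofinal subset of `[0, t)` of size `cf t`,
together with points witnessing the discontinuity beyond each of its elements, is a set of fewer
than `|τ|` points on which no continuous function agrees with `x`.

Conversely, `x ∈ M_{τσ}` can only be discontinuous at points `p` with `cf p ≥ τ`. Below the top
these are the ordinals `τ * (β + 1)`, each isolated from the left among them, and the fewer than
`cf p` points of `S` below `p` are bounded below `p`. So `p` gets an interval `(q p, p]` meeting
`S` at most in `p` and containing no other such point except when `p` is the top. Keeping the
intervals not swallowed by the top one makes them pairwise disjoint, and making `x` constant,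
equal to `x p`, on each of them gives a continuous function that agrees with `x` on `S`.
-/

/-- A regular (initial) ordinal: an ordinal equal to its own cofinality. -/
def IsRegularOrdinal (o : Ordinal) : Prop := o.cof.ord = o

/-- `M_{τσ}`: the set of functions `x : [0, τ·σ] → ℝ` that are continuous at every
point `t` with `cf(t) < τ`. -/
def MSet (τ σ : Ordinal) : Set (Set.Iic (τ * σ) → ℝ) :=
  {x | ∀ t : Set.Iic (τ * σ), ((t : Ordinal).cof.ord < τ) → ContinuousAt x t}

open Set Filter Topology Cardinal Order
open scoped Ordinal

universe u

section Rounding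

variable {α : Type*} [LinearOrder α]

open Classical in
/-- Meant for pairwise disjoint intervals `(q p, p]`; otherwise `choose` picks one of them. -/
noncomputable def roundUp (P : Set α) (q : α → α) (u : α) : α :=
  if h : ∃ p ∈ P, u ∈ Ioc (q p) p then h.choose else u

variable {P : Set α} {q : α → α}

theorem roundUp_eq_of_mem (hP : P.PairwiseDisjoint fun p ↦ Ioc (q p) p) {p u : α} (hp : p ∈ P)
    (hu : u ∈ Ioc (q p) p) : roundUp P q u = p := by
  have h : ∃ p ∈ P, u ∈ Ioc (q p) p := ⟨p, hp, hu⟩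
  rw [roundUp, dif_pos h]
  exact hP.elim h.choose_spec.1 hp (not_disjoint_iff.2 ⟨u, h.choose_spec.2, hu⟩)

theorem roundUp_eq_self {u : α} (hu : ∀ p ∈ P, u ∉ Ioc (q p) p) : roundUp P q u = u := by
  rw [roundUp, dif_neg]
  rintro ⟨p, hp, hup⟩
  exact hu p hp hup

theorem roundUp_eq_self_of_forall_notMem_Ioo (hP : P.PairwiseDisjoint fun p ↦ Ioc (q p) p)
    {u : α} (hu : ∀ p ∈ P, u ∉ Ioo (q p) p) : roundUp P q u = u := by
  by_cases hcov : ∃ p ∈ P, u ∈ Ioc (q p) p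
  · obtain ⟨p, hp, hqu, hup⟩ := hcov
    obtain rfl : u = p := hup.eq_or_lt.resolve_right fun hlt ↦ hu p hp ⟨hqu, hlt⟩
    exact roundUp_eq_of_mem hP hp ⟨hqu, le_rfl⟩
  · push Not at hcov
    exact roundUp_eq_self hcov

theorem le_roundUp (P : Set α) (q : α → α) (u : α) : u ≤ roundUp P q u := by
  unfold roundUp
  split_ifs with h
  · exact h.choose_spec.2.2
  · exact le_rfl

theorem roundUp_le {t u : α} (ht : ∀ p ∈ P, t ∉ Ioc (q p) p) (hut : u ≤ t) :
    roundUp P q u ≤ t := by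
  unfold roundUp
  split_ifs with h
  · obtain ⟨hp, hqu, -⟩ := h.choose_spec
    by_contra! hlt
    exact ht _ hp ⟨hqu.trans_le hut, hlt.le⟩
  · exact hut

theorem continuous_comp_roundUp [TopologicalSpace α] [OrderTopology α] [SuccOrder α]
    {β : Type*} [TopologicalSpace β] (hP : P.PairwiseDisjoint fun p ↦ Ioc (q p) p)
    {x : α → β}
    (hx : ∀ t, (∀ p ∈ P, t ∉ Ioc (q p) p) → ContinuousAt x t) :
    Continuous (x ∘ roundUp P q) := by
  refine continuous_iff_continuousAt.2 fun t ↦ ?_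
  by_cases hcov : ∃ p ∈ P, t ∈ Ioc (q p) p
  · obtain ⟨p, hp, hqt, htp⟩ := hcov
    have hconst : (fun _ ↦ x p) =ᶠ[𝓝 t] x ∘ roundUp P q := by
      rw [← SuccOrder.nhdsLE_eq_nhds]
      filter_upwards [mem_nhdsWithin_of_mem_nhds (Ioi_mem_nhds hqt), self_mem_nhdsWithin]
        with u hqu hut
      simp [roundUp_eq_of_mem hP hp ⟨hqu, hut.trans htp⟩]
    exact continuousAt_const.congr hconst
  · push Not at hcov
    have hle : ∀ᶠ u in 𝓝 t, u ≤ t := by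
      rw [← SuccOrder.nhdsLE_eq_nhds]
      exact self_mem_nhdsWithin
    have hround : ContinuousAt (roundUp P q) t := by
      rw [ContinuousAt, roundUp_eq_self hcov]
      exact tendsto_of_tendsto_of_tendsto_of_le_of_le' tendsto_id tendsto_const_nhds
        (.of_forall (le_roundUp P q)) (hle.mono fun u ↦ roundUp_le hcov)
    exact (hx t hcov).comp_of_eq hround (roundUp_eq_self hcov)

def uncoveredEnds (D : Set α) (q : α → α) : Set α :=
  {p ∈ D | ∀ p' ∈ D, p < p' → p ≤ q p'}

theorem pairwiseDisjoint_uncoveredEnds (D : Set α) (q : α → α) :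
    (uncoveredEnds D q).PairwiseDisjoint fun p ↦ Ioc (q p) p := by
  intro p₁ h₁ p₂ h₂ hne
  rcases hne.lt_or_gt with hlt | hlt
  · exact Ioc_disjoint_Ioc_of_le (h₁.2 p₂ h₂.1 hlt)
  · exact (Ioc_disjoint_Ioc_of_le (h₂.2 p₁ h₁.1 hlt)).symm

theorem exists_uncoveredEnds_mem_Ioc [OrderTop α] {D : Set α} (hlt : ∀ p ∈ D, q p < p)
    (hgap : ∀ p ∈ D, p ≠ ⊤ → ∀ p' ∈ D, p' < p → p' ≤ q p) {p : α} (hp : p ∈ D) :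
    ∃ p' ∈ uncoveredEnds D q, p ∈ Ioc (q p') p' := by
  by_cases hexp : p ∈ uncoveredEnds D q
  · exact ⟨p, hexp, hlt p hp, le_rfl⟩
  · obtain ⟨p', hp', hpp', hqp⟩ : ∃ p' ∈ D, p < p' ∧ q p' < p := by
      simpa [uncoveredEnds, hp] using hexp
    obtain rfl : p' = ⊤ := by
      by_contra hne
      exact (hgap p' hp' hne p hp hpp').not_gt hqp
    exact ⟨⊤, ⟨hp', fun _ _ h ↦ (not_top_lt h).elim⟩, hqp, le_top⟩

theorem exists_continuous_eqOn_of_continuousAt [TopologicalSpace α] [OrderTopology α]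
    [SuccOrder α] [OrderTop α] {β : Type*} [TopologicalSpace β] {D S : Set α} {x : α → β}
    (hx : ∀ t ∉ D, ContinuousAt x t)
    (hD : ∀ p ∈ D, ∃ a < p,
      (∀ s ∈ S, s < p → s ≤ a) ∧ (p ≠ ⊤ → ∀ p' ∈ D, p' < p → p' ≤ a)) :
    ∃ y : α → β, Continuous y ∧ EqOn y x S := by
  choose! q hqlt hqS hqD using hD
  have hP := pairwiseDisjoint_uncoveredEnds D q
  refine ⟨x ∘ roundUp (uncoveredEnds D q) q, continuous_comp_roundUp hP fun t ht ↦ ?_,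
    fun s hs ↦ ?_⟩
  · refine hx t fun htD ↦ ?_
    obtain ⟨p, hp, htp⟩ := exists_uncoveredEnds_mem_Ioc hqlt hqD htD
    exact ht p hp htp
  · rw [Function.comp_apply, roundUp_eq_self_of_forall_notMem_Ioo hP]
    exact fun p hp hsp ↦ (hqS p hp.1 s hs hsp.2).not_gt hsp.1

end Rounding

theorem continuousAt_of_forall_exists_eqOn {α : Type u} [LinearOrder α] [TopologicalSpace α]
    [OrderTopology α] [SuccOrder α] {β : Type*} [TopologicalSpace β] {x : α → β} {t : α}
    {ι : Type u} {f : ι → α} (hf_lt : ∀ i, f i < t) (hf : ∀ a < t, ∃ i, a ≤ f i)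
    (h : ∀ S : Set α, #S ≤ #ι + 1 → ∃ y : α → β, ContinuousAt y t ∧ EqOn y x S) :
    ContinuousAt x t := by
  by_cases hmin : IsMin t
  · rw [ContinuousAt, ← SuccOrder.nhdsLE_eq_nhds, hmin.Iic_eq, nhdsWithin_singleton]
    exact tendsto_pure_nhds x t
  have hbasis := SuccOrder.hasBasis_nhds_Ioc_of_exists_lt (not_isMin_iff.1 hmin)
  rw [ContinuousAt, hbasis.tendsto_left_iff]
  intro V hV
  by_contra! hbad
  have hescape : ∀ i, ∃ u ∈ Ioc (f i) t, x u ∉ V := fun i ↦ by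
    simpa [MapsTo, and_assoc] using hbad (f i) (hf_lt i)
  choose g hg hgV using hescape
  obtain ⟨y, hy, hyx⟩ :=
    h (insert t (range g)) (mk_insert_le.trans (by gcongr; exact mk_range_le))
  rw [ContinuousAt, hbasis.tendsto_left_iff] at hy
  obtain ⟨a, hat, ha⟩ := hy V (hyx (mem_insert t _) ▸ hV)
  obtain ⟨i, hi⟩ := hf a hat
  have hgi : y (g i) ∈ V := ha ⟨hi.trans_lt (hg i).1, (hg i).2⟩
  exact hgV i (hyx (mem_insert_of_mem _ (mem_range_self i)) ▸ hgi)

namespace Ordinal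

theorem dvd_of_le_ord_cof {τ p : Ordinal} (hτ : τ ≠ 0) (hp : τ ≤ p.cof.ord) : τ ∣ p := by
  rw [dvd_iff_mod_eq_zero]
  by_contra hmod
  have hcof : p.cof = (p % τ).cof := by
    conv_lhs => rw [← div_add_mod p τ]
    exact cof_add _ hmod
  exact (hp.trans (hcof ▸ ord_cof_le _)).not_gt (mod_lt p hτ)

/-- Such `p` is a successor multiple `τ * (β + 1)`, and `a = τ * β` works. -/
theorem exists_lt_forall_le_of_le_ord_cof {τ σ p : Ordinal} (hτ : τ ≠ 0) (hστ : σ ≤ τ)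
    (hp : τ ≤ p.cof.ord) (hpσ : p < τ * σ) :
    ∃ a < p, ∀ p', τ ≤ p'.cof.ord → p' < p → p' ≤ a := by
  have hτ0 : 0 < τ := pos_iff_ne_zero.2 hτ
  obtain ⟨γ, rfl⟩ := dvd_of_le_ord_cof hτ hp
  rcases zero_or_succ_or_isSuccLimit γ with rfl | ⟨β, rfl⟩ | hγ
  · simp [hτ] at hp
  · refine ⟨τ * β, (mul_lt_mul_iff_right₀ hτ0).2 (lt_succ β), fun p' hp' hlt ↦ ?_⟩
    obtain ⟨γ', rfl⟩ := dvd_of_le_ord_cof hτ hp'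
    exact (mul_le_mul_iff_right₀ hτ0).2 (lt_succ_iff.1 ((mul_lt_mul_iff_right₀ hτ0).1 hlt))
  · rw [cof_mul hτ hγ.isSuccPrelimit] at hp
    exact absurd (hp.trans (ord_cof_le γ))
      (((mul_lt_mul_iff_right₀ hτ0).1 hpσ).trans_le hστ).not_ge

theorem exists_lt_forall_le_of_mk_lt {τ p : Ordinal.{u}} {B : Set Ordinal.{u}}
    (hB : #B < Cardinal.lift.{u + 1} τ.card) (hp : τ ≤ p.cof.ord) :
    ∃ a < p, ∀ b ∈ B, b < p → b ≤ a := by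
  refine ⟨sSup (B ∩ Iio p), sSup_lt_of_lt_cof ?_ fun b hb ↦ hb.2,
    fun b hb hbp ↦ le_csSup ⟨p, fun b hb ↦ hb.2.le⟩ ⟨hb, hbp⟩⟩
  rw [← lift_cof]
  have hτp : τ.card ≤ p.cof := by simpa using card_le_card hp
  exact (mk_le_mk_of_subset inter_subset_left).trans_lt (hB.trans_le (Cardinal.lift_le.2 hτp))

theorem cof_add_one_lt_card {o τ : Ordinal} (hτ : τ.IsInitial) (hωτ : ω ≤ τ)
    (ho : o.cof.ord < τ) : o.cof + 1 < τ.card := by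
  have hω : ℵ₀ ≤ τ.card := aleph0_le_card.2 hωτ
  exact add_lt_of_lt hω (by simpa using hτ.card_lt_card.2 ho) (one_lt_aleph0.trans_le hω)

end Ordinal

theorem exists_lt_forall_le_Iic_mul {τ σ : Ordinal.{u}} (hτ : τ ≠ 0) (hστ : σ ≤ τ)
    {S : Set (Iic (τ * σ))} (hS : #S < Cardinal.lift.{u + 1} τ.card) {p : Iic (τ * σ)}
    (hp : τ ≤ p.1.cof.ord) :
    ∃ a < p, (∀ s ∈ S, s < p → s ≤ a) ∧
      (p ≠ ⊤ → ∀ p' : Iic (τ * σ), τ ≤ p'.1.cof.ord → p' < p → p' ≤ a) := by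
  obtain ⟨a₁, ha₁p, ha₁⟩ :=
    Ordinal.exists_lt_forall_le_of_mk_lt (B := Subtype.val '' S) (mk_image_le.trans_lt hS) hp
  obtain ⟨a₂, ha₂p, ha₂⟩ : ∃ a < p.1, p ≠ ⊤ → ∀ p', τ ≤ p'.cof.ord → p' < p.1 → p' ≤ a := by
    by_cases htop : p = ⊤
    · exact ⟨a₁, ha₁p, fun h ↦ (h htop).elim⟩
    · obtain ⟨a, hap, ha⟩ := Ordinal.exists_lt_forall_le_of_le_ord_cof hτ hστ hp
        (lt_top_iff_ne_top.2 htop)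
      exact ⟨a, hap, fun _ ↦ ha⟩
  refine ⟨⟨max a₁ a₂, (max_lt ha₁p ha₂p).le.trans p.2⟩, max_lt ha₁p ha₂p, fun s hs hsp ↦ ?_,
    fun htop p' hp' hlt ↦ ?_⟩
  · exact le_max_of_le_left (ha₁ s.1 (mem_image_of_mem _ hs) hsp)
  · exact le_max_of_le_right (ha₂ htop p'.1 hp' hlt)

theorem stmt6_general (τ σ : Ordinal) (hτinit : τ.IsInitial)
    (hτ : (Cardinal.aleph 1).ord ≤ τ) (hστ : σ ≤ τ)
    (x : Set.Iic (τ * σ) → ℝ) :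
    x ∈ MSet τ σ ↔
      ∀ S : Set (Set.Iic (τ * σ)), Cardinal.mk ↥S < Cardinal.lift.{1, 0} τ.card →
        ∃ y : Set.Iic (τ * σ) → ℝ, Continuous y ∧ ∀ t ∈ S, y t = x t := by
  have hωτ : ω ≤ τ := (omega0_le_ord.2 (aleph0_le_aleph 1)).trans hτ
  have hτ0 : τ ≠ 0 := (Ordinal.omega0_pos.trans_le hωτ).ne'
  constructor
  · intro hx S hS
    exact exists_continuous_eqOn_of_continuousAt
      (D := {p : Iic (τ * σ) | τ ≤ p.1.cof.ord}) (fun t ht ↦ hx t (not_le.1 ht))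
      fun p hp ↦ exists_lt_forall_le_Iic_mul hτ0 hστ hS hp
  · intro h t hcof
    obtain ⟨C, hC, hCcard⟩ := Order.exists_cof_eq (Iio t.1)
    let f : C → Iic (τ * σ) := fun c ↦ ⟨c.1.1, (mem_Iio.1 c.1.2).le.trans t.2⟩
    refine continuousAt_of_forall_exists_eqOn (f := f) (fun c ↦ c.1.2) (fun a hat ↦ ?_)
      fun S hS ↦ ?_
    · obtain ⟨c, hc, hac⟩ := hC ⟨a.1, hat⟩
      exact ⟨⟨c, hc⟩, hac⟩
    · refine (h S (hS.trans_lt ?_)).imp fun y hy ↦ ⟨hy.1.continuousAt, fun u hu ↦ hy.2 u hu⟩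
      rw [hCcard, Ordinal.cof_Iio, ← Ordinal.lift_cof]
      simpa using lift_lt.2 (Ordinal.cof_add_one_lt_card hτinit hωτ hcof)

/-- Let `τ ≥ ω₁` be a regular initial ordinal and `σ ≤ τ` an initial ordinal.
Then `x : [0, τ·σ] → ℝ` belongs to `M_{τσ}` iff for every subset `S` of `[0, τ·σ]`
of cardinality `< |τ|` there is a continuous function `y : [0, τ·σ] → ℝ` agreeing
with `x` on `S` (i.e. every `λ`-neighborhood of `x`, `λ < τ`, meets `C_p([0, τ·σ])`). -/
theorem stmt6 (τ σ : Ordinal) (hreg : IsRegularOrdinal τ) (hτinit : τ.IsInitial)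
    (hτ : (Cardinal.aleph 1).ord ≤ τ) (hσ : σ.IsInitial) (hστ : σ ≤ τ)
    (x : Set.Iic (τ * σ) → ℝ) :
    x ∈ MSet τ σ ↔
      ∀ S : Set (Set.Iic (τ * σ)), Cardinal.mk ↥S < Cardinal.lift.{1, 0} τ.card →
        ∃ y : Set.Iic (τ * σ) → ℝ, Continuous y ∧ ∀ t ∈ S, y t = x t :=
  stmt6_general τ σ hτinit hτ hστ x
end

section
/- Let α be an ordinal and f : [0,α] → ℝ. Then the following are equivalent: (i) for every countable subset A of [0,α] there exists a continuous function g : [0,α] → ℝ with g(t) = f(t) for all t ∈ A (i.e. f is strictly ℵ₀-continuous); (ii) f is continuous at every point of countable character of [0,α], i.e. at every limit ordinal t ≤ α with cf(t) = ω. -/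
/-!
At a point with a countable neighbourhood basis, continuity is sequential continuity, and a
sequence together with its limit is a countable set on which `f` agrees with a continuous
function. Conversely, for countable `A` let `C` be the closure of `A ∪ {α}` and send every point
to the least element of `C` above it. Composed with `f`, this retraction agrees with `f` on `A`
and is locally constant away from the accumulation points of `C`; these are accumulation points
of the countable set `A ∪ {α}`, hence limit ordinals of cofinality `ω`, where `f` is continuous
and the retraction fixes the point and is continuous.
-/

open Set Filter Topology Order Cardinal

theorem continuousAt_of_forall_countable_exists_eqOn {X Y : Type*} [TopologicalSpace X]
    [TopologicalSpace Y] {f : X → Y} {x : X} [(𝓝 x).IsCountablyGenerated]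
    (h : ∀ A : Set X, A.Countable → ∃ g : X → Y, ContinuousAt g x ∧ EqOn g f A) :
    ContinuousAt f x := by
  refine tendsto_iff_seq_tendsto.2 fun u hu => ?_
  obtain ⟨g, hg, hgf⟩ := h (insert x (range u)) ((countable_range u).insert x)
  have hgu : Tendsto (g ∘ u) atTop (𝓝 (g x)) := hg.tendsto.comp hu
  rw [hgf (mem_insert x _)] at hgu
  exact hgu.congr fun n => hgf (mem_insert_of_mem _ (mem_range_self n))

namespace Ordinal

theorem isCountablyGenerated_nhds {o : Ordinal} (ho : o.cof ≤ ℵ₀) :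
    (𝓝 o).IsCountablyGenerated := by
  rcases eq_or_ne o 0 with rfl | ho₀
  · rw [← bot_eq_zero, SuccOrder.nhds_bot]
    infer_instance
  obtain ⟨s, hs, hcard⟩ := Order.exists_cof_eq (Iio o)
  have : Countable s := by
    rw [← mk_le_aleph0_iff, hcard, cof_Iio, ← lift_cof, lift_le_aleph0]
    exact ho
  refine ((SuccOrder.hasBasis_nhds_Ioc_of_exists_lt ⟨0, pos_iff_ne_zero.2 ho₀⟩).to_hasBasis
    (p' := fun _ : s => True) (s' := fun a => Ioc a.1.1 o) (fun b hb => ?_)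
    (fun a _ => ⟨a.1.1, a.1.2, subset_rfl⟩)).isCountablyGenerated
  obtain ⟨a, has, hba⟩ := hs ⟨b, hb⟩
  exact ⟨⟨a, has⟩, trivial, Ioc_subset_Ioc_left hba⟩

theorem cof_eq_aleph0_of_accPt {o : Ordinal} {s : Set Ordinal} (hs : s.Countable)
    (h : AccPt o (𝓟 s)) : o.cof = ℵ₀ := by
  refine le_antisymm ?_ (aleph0_le_cof_iff.2 (one_lt_cof_iff.2 h.isSuccLimit))
  have hcofinal : IsCofinal (Subtype.val ⁻¹' s : Set (Iio o)) := fun b => by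
    obtain ⟨a, has, hba, hao⟩ := (SuccOrder.accPt_principal.1 h).2 b b.2
    exact ⟨⟨a, hao⟩, has, hba.le⟩
  have hle := Order.cof_le hcofinal
  rw [cof_Iio, ← lift_cof] at hle
  exact lift_le_aleph0.1 <| hle.trans <|
    mk_le_aleph0_iff.2 (hs.preimage Subtype.val_injective).to_subtype

end Ordinal

section CeilIn

variable {X : Type*} [LinearOrder X] [WellFoundedLT X] [OrderTop X] {C : Set X}

noncomputable def ceilIn (C : Set X) (hC : ⊤ ∈ C) (x : X) : X :=
  wellFounded_lt.min (C ∩ Ici x) ⟨⊤, hC, le_top⟩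

variable (hC : ⊤ ∈ C)

theorem ceilIn_mem (x : X) : ceilIn C hC x ∈ C :=
  (wellFounded_lt.min_mem (C ∩ Ici x) _).1

theorem le_ceilIn (x : X) : x ≤ ceilIn C hC x :=
  (wellFounded_lt.min_mem (C ∩ Ici x) _).2

theorem ceilIn_le {x c : X} (hc : c ∈ C) (hxc : x ≤ c) : ceilIn C hC x ≤ c :=
  wellFounded_lt.min_le (s := C ∩ Ici x) ⟨hc, hxc⟩

theorem ceilIn_of_mem {x : X} (hx : x ∈ C) : ceilIn C hC x = x :=
  (ceilIn_le hC hx le_rfl).antisymm (le_ceilIn hC x)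

variable [TopologicalSpace X] [OrderTopology X] [SuccOrder X]

theorem continuousAt_ceilIn {x : X} (hx : x ∈ C) : ContinuousAt (ceilIn C hC) x := by
  have hIic : Iic x ∈ 𝓝 x := SuccOrder.nhdsLE_eq_nhds x ▸ self_mem_nhdsWithin
  rw [ContinuousAt, ceilIn_of_mem hC hx]
  refine tendsto_of_tendsto_of_tendsto_of_le_of_le' tendsto_id tendsto_const_nhds
    (Eventually.of_forall (le_ceilIn hC)) ?_
  filter_upwards [hIic] with y hy using ceilIn_le hC hx hy

theorem ceilIn_eventuallyEq_of_not_accPt {x : X} (hx : ¬AccPt x (𝓟 C)) :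
    ceilIn C hC =ᶠ[𝓝 x] fun _ => ceilIn C hC x := by
  rw [accPt_iff_frequently, not_frequently] at hx
  obtain ⟨b, -, hb, hbC⟩ := exists_Icc_mem_subset_of_mem_nhdsLE
    (nhdsWithin_le_nhds (a := x) (s := Iic x) hx)
  rw [SuccOrder.nhdsLE_eq_nhds] at hb
  filter_upwards [hb] with y hy
  refine (ceilIn_le hC (ceilIn_mem hC x) (hy.2.trans (le_ceilIn hC x))).antisymm
    (ceilIn_le hC (ceilIn_mem hC y) ?_)
  by_contra! hlt
  exact hbC ⟨hy.1.trans (le_ceilIn hC y), hlt.le⟩ ⟨hlt.ne, ceilIn_mem hC y⟩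

theorem continuous_comp_ceilIn {Y : Type*} [TopologicalSpace Y] {f : X → Y} (hCc : IsClosed C)
    (hf : ∀ x, AccPt x (𝓟 C) → ContinuousAt f x) : Continuous (f ∘ ceilIn C hC) := by
  refine continuous_iff_continuousAt.2 fun x => ?_
  by_cases hx : AccPt x (𝓟 C)
  · have hxC : x ∈ C := hCc.closure_subset (derivedSet_subset_closure C hx)
    exact (hf x hx).comp_of_eq (continuousAt_ceilIn hC hxC) (ceilIn_of_mem hC hxC)
  · exact continuousAt_const.congr ((ceilIn_eventuallyEq_of_not_accPt hC hx).fun_comp f).symm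

end CeilIn

/-- A function `f : [0,α] → ℝ` is strictly `ℵ₀`-continuous (for every countable
`A ⊆ [0,α]` there is a continuous `g : [0,α] → ℝ` agreeing with `f` on `A`) iff `f`
is continuous at every point of countable character of `[0,α]`, i.e. at every limit
ordinal `t ≤ α` with `cf(t) = ω`. -/
theorem stmt7 (α : Ordinal) (f : Set.Iic α → ℝ) :
    (∀ A : Set (Set.Iic α), A.Countable →
      ∃ g : Set.Iic α → ℝ, Continuous g ∧ ∀ t ∈ A, g t = f t) ↔
    (∀ t : Set.Iic α, Order.IsSuccLimit (t : Ordinal) →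
      Ordinal.cof (t : Ordinal) = Cardinal.aleph0 → ContinuousAt f t) := by
  constructor
  · intro H t _ hcof
    have : (𝓝 t).IsCountablyGenerated := by
      have := Ordinal.isCountablyGenerated_nhds hcof.le
      rw [nhds_subtype]
      infer_instance
    exact continuousAt_of_forall_countable_exists_eqOn fun A hA =>
      (H A hA).imp fun g hg => ⟨hg.1.continuousAt, hg.2⟩
  · intro H A hA
    have hC : ⊤ ∈ closure (insert ⊤ A) := subset_closure (mem_insert ⊤ A)
    refine ⟨f ∘ ceilIn _ hC, continuous_comp_ceilIn hC isClosed_closure fun x hx => ?_,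
      fun t ht => congrArg f (ceilIn_of_mem hC (subset_closure (mem_insert_of_mem ⊤ ht)))⟩
    rw [← mem_derivedSet, derivedSet_closure, mem_derivedSet] at hx
    have hx' : AccPt (x : Ordinal) (𝓟 (Subtype.val '' insert ⊤ A)) := by
      simpa only [map_principal] using hx.map continuous_subtype_val.continuousAt
        Subtype.val_injective
    exact H x hx'.isSuccLimit (Ordinal.cof_eq_aleph0_of_accPt ((hA.insert ⊤).image _) hx')
end

section
/- Let τ ≥ ω₁ be a regular initial ordinal and let σ ≤ τ be an initial ordinal. Then there exists a topological embedding f : c₀(Γ_σ) → M_{τσ} such that f(0) = 0 and f(x) ∈ M_{τσ} \ C_p([0, τ·σ]) whenever x ≠ 0 (i.e. f(x) fails to be continuous for every nonzero x). -/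
/-- `c₀(Γ_σ)`: the functions on the discrete set `Γ_σ` of ordinals `< σ` such that
`{t : |x t| ≥ ε}` is finite for every `ε > 0`; as a subtype it carries the topology
of pointwise convergence inherited from `ℝ^{Γ_σ}`. -/
def c0Set (σ : Ordinal) : Set (Set.Iio σ → ℝ) :=
  {x | ∀ ε : ℝ, 0 < ε → {t : Set.Iio σ | ε ≤ |x t|}.Finite}

/-!
Send `x ∈ c₀(Γ_σ)` to the function equal to `x s` at the point `τ·(s+1)` and to `0` elsewhere.
Reading off the values at these points inverts the map continuously, so it is an embedding.
Every `τ·(s+1)` has cofinality `cf τ = τ`, so no point of cofinality `< τ` is of this form;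
at such a point the function is continuous, because only the finitely many points where
`|x| ≥ ε` have to be avoided and finite sets are closed. Every `τ·(s+1)` is
a limit of points of the open interval `(τ·s, τ·(s+1))`, where the function vanishes, so it
is discontinuous at `τ·(s+1)` as soon as `x s ≠ 0`.
-/

open Function Ordinal Order Set Topology

section ExtendZero

variable {α β : Type*}

theorem isEmbedding_extend_zero {M : Type*} [TopologicalSpace M] [Zero M] {p : α → β}
    (hp : Injective p) : IsEmbedding (fun x : α → M => extend p x 0) := by
  have hinv : LeftInverse (fun y : β → M => y ∘ p) (fun x => extend p x 0) :=
    fun x => funext (hp.extend_apply x 0)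
  refine hinv.isEmbedding (continuous_pi fun a => continuous_apply (p a)) ?_
  refine continuous_pi fun b => ?_
  by_cases hb : ∃ a, p a = b
  · obtain ⟨a, rfl⟩ := hb
    simpa only [hp.extend_apply] using continuous_apply a
  · simpa only [extend_apply' _ _ _ hb] using continuous_const

variable [TopologicalSpace β]

theorem continuousAt_extend_zero_of_notMem_range [T1Space β] {p : α → β} (hp : Injective p)
    {x : α → ℝ} (hx : ∀ ε : ℝ, 0 < ε → {a | ε ≤ |x a|}.Finite) {t : β} (ht : t ∉ range p) :
    ContinuousAt (extend p x 0) t := by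
  rw [ContinuousAt, extend_apply' _ _ _ ht, Pi.zero_apply, Metric.tendsto_nhds]
  intro ε hε
  have hlarge : (p '' {a | ε ≤ |x a|})ᶜ ∈ 𝓝 t :=
    ((hx ε hε).image p).isClosed.compl_mem_nhds fun ⟨a, _, hat⟩ => ht ⟨a, hat⟩
  filter_upwards [hlarge] with u hu
  rw [Real.dist_0_eq_abs]
  by_cases hup : ∃ a, p a = u
  · obtain ⟨a, rfl⟩ := hup
    rw [hp.extend_apply]
    exact not_le.1 fun h => hu ⟨a, h, rfl⟩
  · simpa only [extend_apply' _ _ _ hup, Pi.zero_apply, abs_zero] using hε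

theorem not_continuousAt_extend_zero {M : Type*} [TopologicalSpace M] [T1Space M] [Zero M]
    {p : α → β} (hp : Injective p) {x : α → M} {a : α} (hxa : x a ≠ 0)
    (ha : p a ∈ closure (range p)ᶜ) : ¬ ContinuousAt (extend p x 0) (p a) := by
  intro hcont
  have himage : extend p x 0 '' (range p)ᶜ ⊆ {0} := by
    rintro _ ⟨b, hb, rfl⟩
    exact extend_apply' _ _ _ hb
  have hmem := closure_mono himage (mem_closure_image hcont ha)
  rw [hp.extend_apply, closure_singleton] at hmem
  exact hxa hmem

end ExtendZero

theorem Order.IsSuccLimit.mem_closure_Ioo {α : Type*} [LinearOrder α] [TopologicalSpace α]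
    [OrderTopology α] {a c : α} (ha : IsSuccLimit a) (hc : c < a) : a ∈ closure (Ioo c a) := by
  have hne : (𝓝[<] a).NeBot :=
    mem_closure_iff_nhdsWithin_neBot.1 (ha.isLUB_Iio.mem_closure ⟨c, hc⟩)
  exact mem_closure_iff_nhdsWithin_neBot.2 (hne.mono (nhdsWithin_le_of_mem (Ioo_mem_nhdsLT hc)))

theorem IsRegularOrdinal.isSuccLimit {τ : Ordinal} (hreg : IsRegularOrdinal τ) (hτ : ω ≤ τ) :
    IsSuccLimit τ := by
  rw [← hreg]
  refine Cardinal.isSuccLimit_ord ?_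
  rwa [← Cardinal.ord_le_ord, hreg, Cardinal.ord_aleph0]

def peak (τ σ : Ordinal) (s : Iio σ) : Iic (τ * σ) :=
  ⟨τ * (s + 1), mul_le_mul_right (add_one_le_of_lt s.2) τ⟩

section Peak

variable {τ σ : Ordinal}

theorem peak_injective (hτ : τ ≠ 0) : Injective (peak τ σ) := by
  intro s s' h
  have h' : τ * (s + 1) = τ * (s' + 1) := congrArg Subtype.val h
  rw [mul_right_inj' hτ, ← succ_eq_add_one, ← succ_eq_add_one] at h'
  exact Subtype.ext (succ_injective h')

theorem cof_peak (hτ : τ ≠ 0) (s : Iio σ) : (peak τ σ s : Ordinal).cof = τ.cof := by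
  simp only [peak, mul_add_one, cof_add _ hτ]

theorem isSuccLimit_peak (hτ : IsSuccLimit τ) (s : Iio σ) :
    IsSuccLimit (peak τ σ s : Ordinal) := by
  simpa only [peak, mul_add_one] using isSuccLimit_add (τ * s) hτ

theorem peak_mem_closure_compl_range (hτ : IsSuccLimit τ) (s : Iio σ) :
    peak τ σ s ∈ closure (range (peak τ σ))ᶜ := by
  have hτ0 : 0 < τ := hτ.pos
  have hlt : τ * s < peak τ σ s := by
    simpa [peak] using (mul_lt_mul_iff_of_pos_left hτ0).2 (lt_add_one (s : Ordinal))
  rw [closure_subtype]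
  refine closure_mono ?_ ((isSuccLimit_peak hτ s).mem_closure_Ioo hlt)
  rintro u ⟨hsu, hus⟩
  refine ⟨⟨u, hus.le.trans (peak τ σ s).2⟩, ?_, rfl⟩
  rintro ⟨s', hs'⟩
  rw [Subtype.ext_iff] at hs'
  simp only [peak] at hs' hsu hus
  rw [← hs', mul_lt_mul_iff_of_pos_left hτ0] at hsu hus
  rw [lt_add_one_iff] at hsu
  exact (add_one_le_iff.1 (lt_add_one_iff.1 hus)).not_ge hsu

end Peak

theorem stmt8_general (τ σ : Ordinal) (hreg : IsRegularOrdinal τ)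
    (hτ : (Cardinal.aleph 1).ord ≤ τ) :
    ∃ f : ↥(c0Set σ) → (Set.Iic (τ * σ) → ℝ),
      Topology.IsEmbedding f ∧ (∀ x, f x ∈ MSet τ σ) ∧
      (∀ x : ↥(c0Set σ), (x : Set.Iio σ → ℝ) = 0 → f x = 0) ∧
      (∀ x : ↥(c0Set σ), (x : Set.Iio σ → ℝ) ≠ 0 → ¬ Continuous (f x)) := by
  have hlim : IsSuccLimit τ := hreg.isSuccLimit <| by
    rw [← Cardinal.ord_aleph0]
    exact Cardinal.ord_le_ord.2 (Cardinal.aleph0_le_aleph 1) |>.trans hτ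
  have hinj := peak_injective (σ := σ) hlim.pos.ne'
  refine ⟨fun x => extend (peak τ σ) x.1 0,
    (isEmbedding_extend_zero hinj).comp IsEmbedding.subtypeVal, ?_, ?_, ?_⟩
  · intro x t ht
    refine continuousAt_extend_zero_of_notMem_range hinj x.2 ?_
    rintro ⟨s, rfl⟩
    rw [cof_peak hlim.pos.ne', hreg] at ht
    exact ht.false
  · intro x hx
    simp only [hx]
    exact extend_const (peak τ σ) 0
  · intro x hx hcont
    obtain ⟨s, hs⟩ := Function.ne_iff.1 hx
    exact not_continuousAt_extend_zero hinj hs (peak_mem_closure_compl_range hlim s)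
      hcont.continuousAt

/-- Let `τ ≥ ω₁` be a regular initial ordinal and `σ ≤ τ` an initial ordinal. Then
there is a topological embedding `f : c₀(Γ_σ) → M_{τσ}` with `f 0 = 0` and such that
`f x ∈ M_{τσ} \ C_p([0, τ·σ])` (i.e. `f x` is discontinuous) for every `x ≠ 0`. -/
theorem stmt8 (τ σ : Ordinal) (hreg : IsRegularOrdinal τ) (hτinit : τ.IsInitial)
    (hτ : (Cardinal.aleph 1).ord ≤ τ) (hσ : σ.IsInitial) (hστ : σ ≤ τ) :
    ∃ f : ↥(c0Set σ) → (Set.Iic (τ * σ) → ℝ),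
      Topology.IsEmbedding f ∧ (∀ x, f x ∈ MSet τ σ) ∧
      (∀ x : ↥(c0Set σ), (x : Set.Iio σ → ℝ) = 0 → f x = 0) ∧
      (∀ x : ↥(c0Set σ), (x : Set.Iio σ → ℝ) ≠ 0 → ¬ Continuous (f x)) :=
  stmt8_general τ σ hreg hτ
end
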